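/- Every finite group H admits an injective group homomorphism i : H → M whose image is a universal subgroup of M. Moreover, if j : H → M is another injective homomorphism with universal image, then there exists an invertible element u ∈ M (i.e. a bijection ω → ω) with j(h) = u ∘ i(h) ∘ u^{-1} for all h ∈ H. -/

import Mathlib

noncomputable section

/- ## Basic setup: the monoid `M = Inj(ω,ω)`, supports, tameness, universal subgroups -/

open CategoryTheory Opposite Simplicial MonoidalCategory

set_option linter.unusedVariables false

/-- The monoid `𝕄 = Inj(ω,ω)` of injective self-maps of `ω = ℕ`, under composition. -/
noncomputable def Mi : Type := {f : ℕ → ℕ // Function.Injective f}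

noncomputable instance : Monoid Mi where
  one := ⟨id, fun _ _ h => h⟩
  mul u v := ⟨u.1 ∘ v.1, u.2.comp v.2⟩
  mul_assoc u v w := rfl
  one_mul u := rfl
  mul_one u := rfl

@[simp] lemma Mi.one_apply (n : ℕ) : (1 : Mi).1 n = n := rfl
@[simp] lemma Mi.mul_apply (u v : Mi) (n : ℕ) : (u * v).1 n = u.1 (v.1 n) := rfl

/-- An element `x` of an `𝕄`-"set" (given by a raw action `act`) is supported on `A ⊆ ω` if
every `u ∈ 𝕄` fixing `A` pointwise fixes `x`. -/
noncomputable def MSuppOn {X : Type*} (act : Mi → X → X) (A : Set ℕ) (x : X) : Prop :=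
  ∀ u : Mi, (∀ a ∈ A, u.1 a = a) → act u x = x

/-- Finitely supported elements. -/
noncomputable def MFinSupp {X : Type*} (act : Mi → X → X) (x : X) : Prop :=
  ∃ A : Set ℕ, A.Finite ∧ MSuppOn act A x

/-- The support of an element: the intersection of all finite sets on which it is supported. -/
noncomputable def MSupp {X : Type*} (act : Mi → X → X) (x : X) : Set ℕ :=
  ⋂₀ ({A | A.Finite ∧ MSuppOn act A x} : Set (Set ℕ))

/-- A (raw) `𝕄`-action is tame if every element is finitely supported. -/
noncomputable def MTame {X : Type*} (act : Mi → X → X) : Prop := ∀ x : X, MFinSupp act x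

/-- A submonoid `H ⊆ 𝕄` is a *universal subgroup* if it is a finite subgroup and `ω`, with the
tautological `H`-action, is a complete `H`-set universe, i.e. every finite `H`-set embeds
`H`-equivariantly into `ω`. -/
noncomputable def IsUniversal (H : Submonoid Mi) : Prop :=
  (∀ h ∈ H, ∃ h' ∈ H, h * h' = 1 ∧ h' * h = 1) ∧ Finite H ∧
    ∀ (n : ℕ) (ρ : ↥H →* Equiv.Perm (Fin n)), ∃ e : Fin n → ℕ,
      Function.Injective e ∧ ∀ (h : ↥H) (i : Fin n), e (ρ h i) = (h : Mi).1 (e i)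

/-!
For a finite group `G`, every orbit of a `G`-set is finite and is determined up to isomorphism
by the conjugacy class of its stabilizers. A complete universe contains each `G ⧸ K` as an orbit
infinitely often (embed `m` disjoint copies of it), so two countable complete universes have
countably infinite, hence equinumerous, sets of orbits of each type; matching orbits type by
type, through representatives with equal stabilizers, gives an equivariant bijection.

For existence, `Σ (n, K), G ⧸ K` is a countable complete universe; transporting its action
along a bijection with `ω` gives an embedding `G → 𝕄` with universal image. For uniqueness, the
actions of `H` on `ω` through `i` and `j` are countable complete universes, and an equivariant
bijection between them is the unit of `𝕄` conjugating `i` into `j`.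
-/

open MulAction

namespace MulAction

variable {G X Y ι : Type*} [Group G] [MulAction G X] [MulAction G Y]

theorem smul_eq_smul_iff_inv_mul_mem_stabilizer {g g' : G} {a : X} :
    g • a = g' • a ↔ g'⁻¹ * g ∈ stabilizer G a := by
  rw [mem_stabilizer_iff, mul_smul, inv_smul_eq_iff]

theorem bijective_mk_out :
    Function.Bijective fun o : orbitRel.Quotient G X =>
      (Quotient.mk'' o.out : orbitRel.Quotient G X) := by
  simp only [Quotient.out_eq']
  exact Function.bijective_id

theorem exists_smul_eq_of_surjective_mk {x : ι → X}
    (hx : Function.Surjective fun i => (Quotient.mk'' (x i) : orbitRel.Quotient G X)) (a : X) :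
    ∃ i, ∃ g : G, g • x i = a := by
  obtain ⟨i, hi⟩ := hx (Quotient.mk'' a)
  obtain ⟨g, hg⟩ := mem_orbit_iff.mp (Quotient.exact' hi.symm)
  exact ⟨i, g, hg⟩

theorem eq_and_mem_stabilizer_of_smul_eq_smul {x : ι → X}
    (hx : Function.Injective fun i => (Quotient.mk'' (x i) : orbitRel.Quotient G X))
    {i j : ι} {g g' : G} (h : g • x i = g' • x j) :
    i = j ∧ g'⁻¹ * g ∈ stabilizer G (x i) := by
  have hij : i = j := hx <| Quotient.sound' <| mem_orbit_iff.mpr ⟨g⁻¹ * g', by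
    rw [mul_smul, ← h, inv_smul_smul]⟩
  subst hij
  exact ⟨rfl, smul_eq_smul_iff_inv_mul_mem_stabilizer.mp h⟩

theorem exists_mulActionHom_of_orbit_reps (x : ι → X) (y : ι → Y)
    (hx : Function.Bijective fun i => (Quotient.mk'' (x i) : orbitRel.Quotient G X))
    (hxy : ∀ i, stabilizer G (x i) ≤ stabilizer G (y i)) :
    ∃ f : X →[G] Y, ∀ i, f (x i) = y i := by
  have hwd : ∀ {i j : ι} {g g' : G}, g • x i = g' • x j → g • y i = g' • y j := by
    intro i j g g' h
    obtain ⟨rfl, hg⟩ := eq_and_mem_stabilizer_of_smul_eq_smul hx.1 h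
    exact smul_eq_smul_iff_inv_mul_mem_stabilizer.mpr (hxy i hg)
  choose i g hg using exists_smul_eq_of_surjective_mk hx.2
  refine ⟨{ toFun := fun a => g a • y (i a), map_smul' := fun h a => ?_ }, fun j => ?_⟩
  · rw [id, ← mul_smul]
    exact hwd (by rw [hg, mul_smul, hg])
  · exact (hwd (g' := 1) (by rw [hg, one_smul])).trans (one_smul G (y j))

theorem MulActionHom.injective_of_orbit_reps {f : X →[G] Y} {x : ι → X} {y : ι → Y}
    (hf : ∀ i, f (x i) = y i)
    (hx : Function.Surjective fun i => (Quotient.mk'' (x i) : orbitRel.Quotient G X))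
    (hy : Function.Injective fun i => (Quotient.mk'' (y i) : orbitRel.Quotient G Y))
    (hyx : ∀ i, stabilizer G (y i) ≤ stabilizer G (x i)) :
    Function.Injective f := by
  intro a b hab
  obtain ⟨i, g, rfl⟩ := exists_smul_eq_of_surjective_mk hx a
  obtain ⟨j, g', rfl⟩ := exists_smul_eq_of_surjective_mk hx b
  rw [map_smul, map_smul, hf, hf] at hab
  obtain ⟨rfl, hg⟩ := eq_and_mem_stabilizer_of_smul_eq_smul hy hab
  exact smul_eq_smul_iff_inv_mul_mem_stabilizer.mpr (hyx i hg)

theorem MulActionHom.surjective_of_orbit_reps {f : X →[G] Y} {x : ι → X} {y : ι → Y}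
    (hf : ∀ i, f (x i) = y i)
    (hy : Function.Surjective fun i => (Quotient.mk'' (y i) : orbitRel.Quotient G Y)) :
    Function.Surjective f := by
  intro b
  obtain ⟨i, g, rfl⟩ := exists_smul_eq_of_surjective_mk hy b
  exact ⟨g • x i, by rw [map_smul, hf]⟩

theorem exists_equiv_of_orbit_reps (x : ι → X) (y : ι → Y)
    (hx : Function.Bijective fun i => (Quotient.mk'' (x i) : orbitRel.Quotient G X))
    (hy : Function.Bijective fun i => (Quotient.mk'' (y i) : orbitRel.Quotient G Y))
    (hxy : ∀ i, stabilizer G (x i) = stabilizer G (y i)) :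
    ∃ e : X ≃ Y, ∀ (g : G) (a : X), e (g • a) = g • e a := by
  obtain ⟨f, hf⟩ := exists_mulActionHom_of_orbit_reps x y hx fun i => (hxy i).le
  refine ⟨Equiv.ofBijective f ⟨?_, MulActionHom.surjective_of_orbit_reps hf hy.2⟩, map_smul f⟩
  exact MulActionHom.injective_of_orbit_reps hf hx.2 hy.1 fun i => (hxy i).ge

end MulAction

section CompleteUniverse

variable {G X Y : Type*} [Monoid G] [MulAction G X] [MulAction G Y]

variable (G X) in
def IsCompleteUniverse : Prop :=
  ∀ (n : ℕ) [MulAction G (Fin n)], ∃ f : Fin n →[G] X, Function.Injective f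

theorem IsCompleteUniverse.exists_injective (hX : IsCompleteUniverse G X)
    (Z : Type*) [Finite Z] [MulAction G Z] : ∃ f : Z →[G] X, Function.Injective f := by
  obtain ⟨n, ⟨e⟩⟩ := Finite.exists_equiv_fin Z
  let := e.symm.mulAction G
  obtain ⟨f, hf⟩ := hX n
  let e' : Z →[G] Fin n := ⟨e, fun g z => by simp [Equiv.smul_def]⟩
  exact ⟨f.comp e', hf.comp e.injective⟩

theorem IsCompleteUniverse.of_injective (hX : IsCompleteUniverse G X) (f : X →[G] Y)
    (hf : Function.Injective f) : IsCompleteUniverse G Y := fun n _ =>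
  let ⟨e, he⟩ := hX n
  ⟨f.comp e, hf.comp he⟩

end CompleteUniverse

section Orbits

variable {G X Y : Type*} [Group G] [MulAction G X] [MulAction G Y]

theorem IsCompleteUniverse.faithfulSMul [Finite G] (hX : IsCompleteUniverse G X) :
    FaithfulSMul G X := by
  obtain ⟨f, hf⟩ := hX.exists_injective G
  refine ⟨fun {g₁ g₂} h => ?_⟩
  have : f (g₁ • 1) = f (g₂ • 1) := by rw [map_smul, map_smul, h]
  simpa using hf this

theorem MulActionHom.stabilizer_apply_of_injective {f : X →[G] Y} (hf : Function.Injective f)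
    (a : X) : stabilizer G (f a) = stabilizer G a := by
  ext g
  rw [mem_stabilizer_iff, mem_stabilizer_iff, ← map_smul, hf.eq_iff]

theorem Sigma.stabilizer_mk {ι : Type*} {Z : ι → Type*} [∀ i, MulAction G (Z i)] (i : ι)
    (z : Z i) : stabilizer G (⟨i, z⟩ : Σ i, Z i) = stabilizer G z := by
  ext g
  simp [mem_stabilizer_iff, Sigma.smul_mk]

theorem IsCompleteUniverse.exists_orbits_stabilizer_eq [Finite G] (hX : IsCompleteUniverse G X)
    (K : Subgroup G) (m : ℕ) :
    ∃ b : Fin m → X,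
      (Function.Injective fun k => (Quotient.mk'' (b k) : orbitRel.Quotient G X)) ∧
      ∀ k, stabilizer G (b k) = K := by
  obtain ⟨f, hf⟩ := hX.exists_injective (Σ _ : Fin m, G ⧸ K)
  refine ⟨fun k => f ⟨k, (1 : G)⟩, fun k l hkl => ?_, fun k => ?_⟩
  · obtain ⟨g, hg⟩ := mem_orbit_iff.mp (Quotient.exact' hkl.symm)
    rw [← map_smul, Sigma.smul_mk] at hg
    exact congrArg Sigma.fst (hf hg)
  · rw [MulActionHom.stabilizer_apply_of_injective hf, Sigma.stabilizer_mk, stabilizer_quotient]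

-- A conjugacy class of subgroups; it determines the orbit up to isomorphism.
variable (G) in
def orbitType (o : orbitRel.Quotient G X) : Set (Subgroup G) :=
  stabilizer G '' o.orbit

theorem orbitType_mk (a : X) : orbitType G (Quotient.mk'' a : orbitRel.Quotient G X) =
    Set.range fun g : G => (stabilizer G a).map (MulAut.conj g).toMonoidHom := by
  rw [orbitType, orbitRel.Quotient.orbit_mk, orbit, ← Set.range_comp]
  exact congrArg Set.range (funext fun g => stabilizer_smul_eq_stabilizer_map_conj g a)

theorem IsCompleteUniverse.infinite_orbitType_fiber [Finite G] (hY : IsCompleteUniverse G Y)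
    (a : X) : Infinite {o : orbitRel.Quotient G Y //
      orbitType G o = orbitType G (Quotient.mk'' a : orbitRel.Quotient G X)} := by
  set F := {o : orbitRel.Quotient G Y //
    orbitType G o = orbitType G (Quotient.mk'' a : orbitRel.Quotient G X)}
  by_contra hfin
  rw [not_infinite_iff_finite] at hfin
  obtain ⟨b, hb, hstab⟩ := hY.exists_orbits_stabilizer_eq (stabilizer G a) (Nat.card F + 1)
  have := Nat.card_le_card_of_injective
    (fun k => (⟨Quotient.mk'' (b k), by rw [orbitType_mk, orbitType_mk, hstab]⟩ : F))
    fun k l hkl => hb (congrArg Subtype.val hkl)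
  rw [Nat.card_fin] at this
  exact Nat.not_succ_le_self _ this

end Orbits

section CountableUniverse

variable {G X Y : Type*} [Group G] [MulAction G X] [MulAction G Y] [Finite G]
  [Countable X] [Countable Y]

theorem IsCompleteUniverse.exists_orbit_equiv (hX : IsCompleteUniverse G X)
    (hY : IsCompleteUniverse G Y) :
    ∃ t : orbitRel.Quotient G X ≃ orbitRel.Quotient G Y,
      ∀ o, orbitType G (t o) = orbitType G o := by
  have fiber : ∀ S, Nonempty ({o : orbitRel.Quotient G X // orbitType G o = S} ≃
      {o : orbitRel.Quotient G Y // orbitType G o = S}) := by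
    intro S
    by_cases hS : (∃ o : orbitRel.Quotient G X, orbitType G o = S) ∨
        ∃ o : orbitRel.Quotient G Y, orbitType G o = S
    · rcases hS with ⟨o, rfl⟩ | ⟨o, rfl⟩ <;>
      · rw [← Quotient.out_eq' o]
        have := hX.infinite_orbitType_fiber o.out
        have := hY.infinite_orbitType_fiber o.out
        exact nonempty_equiv_of_countable
    · simp only [not_or, not_exists] at hS
      exact ⟨@Equiv.equivOfIsEmpty _ _ ⟨fun o => hS.1 o o.2⟩ ⟨fun o => hS.2 o o.2⟩⟩
  exact ⟨Equiv.ofFiberEquiv fun S => (fiber S).some, fun o => Equiv.ofFiberEquiv_map _ o⟩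

theorem IsCompleteUniverse.exists_equiv (hX : IsCompleteUniverse G X)
    (hY : IsCompleteUniverse G Y) : ∃ e : X ≃ Y, ∀ (g : G) (a : X), e (g • a) = g • e a := by
  obtain ⟨t, ht⟩ := hX.exists_orbit_equiv hY
  have hrep (o : orbitRel.Quotient G X) : stabilizer G o.out ∈ orbitType G (t o) := by
    rw [ht]
    exact ⟨o.out, orbitRel.Quotient.mem_orbit.mpr (Quotient.out_eq' o), rfl⟩
  choose y hy hstab using hrep
  refine exists_equiv_of_orbit_reps (fun o => o.out) y ?_ ?_ fun o => (hstab o).symm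
  · exact bijective_mk_out
  · simpa only [orbitRel.Quotient.mem_orbit.mp (hy _)] using t.bijective

end CountableUniverse

section CanonicalUniverse

variable (G : Type*) [Group G]

abbrev CanonicalUniverse : Type _ := Σ p : ℕ × Subgroup G, G ⧸ p.2

variable {G}

theorem exists_injective_canonicalUniverse (Z : Type*) [MulAction G Z] [Countable Z] :
    ∃ f : Z →[G] CanonicalUniverse G, Function.Injective f := by
  obtain ⟨ι, hι⟩ := exists_injective_nat (orbitRel.Quotient G Z)
  let y (o : orbitRel.Quotient G Z) : CanonicalUniverse G :=
    ⟨(ι o, stabilizer G o.out), ((1 : G) : G ⧸ stabilizer G o.out)⟩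
  have hstab (o : orbitRel.Quotient G Z) : stabilizer G (y o) = stabilizer G o.out := by
    rw [Sigma.stabilizer_mk, stabilizer_quotient]
  have hy : Function.Injective fun o => (Quotient.mk'' (y o) : orbitRel.Quotient G _) := by
    intro o o' h
    obtain ⟨g, hg⟩ := mem_orbit_iff.mp (Quotient.exact' h)
    exact hι (congrArg (fun s => s.1.1) hg).symm
  obtain ⟨f, hf⟩ := exists_mulActionHom_of_orbit_reps (fun o => o.out) y bijective_mk_out
    fun o => (hstab o).ge
  exact ⟨f, MulActionHom.injective_of_orbit_reps hf bijective_mk_out.2 hy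
    fun o => (hstab o).le⟩

theorem isCompleteUniverse_canonicalUniverse : IsCompleteUniverse G (CanonicalUniverse G) :=
  fun n _ => exists_injective_canonicalUniverse (Fin n)

end CanonicalUniverse

namespace Mi

def ofPerm : Equiv.Perm ℕ →* Mi where
  toFun σ := ⟨σ, σ.injective⟩
  map_one' := rfl
  map_mul' _ _ := rfl

theorem ofPerm_injective : Function.Injective ofPerm := fun _ _ h =>
  Equiv.ext (congrFun (congrArg Subtype.val h))

theorem exists_units_conj_of_perm {H : Type*} [Monoid H] {i j : H →* Mi} (σ : Equiv.Perm ℕ)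
    (hσ : ∀ (h : H) (n : ℕ), σ ((i h).1 n) = (j h).1 (σ n)) :
    ∃ u : Miˣ, ∀ h : H, j h = (u : Mi) * i h * ((u⁻¹ : Miˣ) : Mi) := by
  refine ⟨Units.map ofPerm (toUnits σ), fun h => Subtype.ext (funext fun n => ?_)⟩
  show (j h).1 n = σ ((i h).1 (σ.symm n))
  rw [hσ, σ.apply_symm_apply]

variable {H X : Type*} [Group H] [MulAction H X]

variable (H) in
def homOfEquiv (ψ : X ≃ ℕ) : H →* Mi :=
  ofPerm.comp (ψ.permCongrHom.toMonoidHom.comp (MulAction.toPermHom H X))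

theorem homOfEquiv_apply (ψ : X ≃ ℕ) (g : H) (n : ℕ) :
    (homOfEquiv H ψ g).1 n = ψ (g • ψ.symm n) := rfl

theorem injective_homOfEquiv [FaithfulSMul H X] (ψ : X ≃ ℕ) :
    Function.Injective (homOfEquiv H ψ) :=
  ofPerm_injective.comp (ψ.permCongrHom.injective.comp MulAction.toPerm_injective)

end Mi

section OmegaVia

variable {H : Type*}

-- A type synonym, so that each `k` carries its own action instance.
def OmegaVia [Monoid H] (_ : H →* Mi) : Type := ℕ

instance [Monoid H] (k : H →* Mi) : MulAction H (OmegaVia k) where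
  smul g n := (k g).1 n
  one_smul n := congrFun (congrArg Subtype.val (map_one k)) n
  mul_smul a b n := congrFun (congrArg Subtype.val (map_mul k a b)) n

instance [Monoid H] (k : H →* Mi) : Countable (OmegaVia k) := inferInstanceAs (Countable ℕ)

variable [Group H]

theorem IsCompleteUniverse.omegaVia_homOfEquiv {X : Type*} [MulAction H X]
    (hX : IsCompleteUniverse H X) (ψ : X ≃ ℕ) :
    IsCompleteUniverse H (OmegaVia (Mi.homOfEquiv H ψ)) :=
  hX.of_injective ⟨ψ, fun g x => by
    show ψ (g • x) = (Mi.homOfEquiv H ψ g).1 (ψ x)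
    rw [Mi.homOfEquiv_apply, ψ.symm_apply_apply]⟩ ψ.injective

theorem isUniversal_mrange_iff [Finite H] {k : H →* Mi} (hk : Function.Injective k) :
    IsUniversal (MonoidHom.mrange k) ↔ IsCompleteUniverse H (OmegaVia k) := by
  let e : H ≃* MonoidHom.mrange k :=
    MulEquiv.ofBijective k.mrangeRestrict ⟨fun a b h => hk (congrArg Subtype.val h),
      k.mrangeRestrict_surjective⟩
  constructor
  · rintro ⟨-, -, hU⟩ n _
    obtain ⟨f, hf, hfe⟩ := hU n ((MulAction.toPermHom H (Fin n)).comp e.symm.toMonoidHom)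
    refine ⟨⟨f, fun g i => ?_⟩, hf⟩
    have h := hfe (e g) i
    rwa [MonoidHom.comp_apply, MulEquiv.coe_toMonoidHom, MulEquiv.symm_apply_apply] at h
  · intro hU
    refine ⟨?_, Finite.of_surjective _ e.surjective, fun n ρ => ?_⟩
    · rintro _ ⟨g, rfl⟩
      exact ⟨k g⁻¹, ⟨g⁻¹, rfl⟩, by rw [← map_mul, mul_inv_cancel, map_one],
        by rw [← map_mul, inv_mul_cancel, map_one]⟩
    · let := MulAction.compHom (Fin n) (ρ.comp e.toMonoidHom)
      obtain ⟨f, hf⟩ := hU n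
      refine ⟨f, hf, fun s i => ?_⟩
      obtain ⟨g, rfl⟩ := e.surjective s
      exact map_smul f g i

end OmegaVia

theorem universal_embeddings_exist_and_are_conjugate :
    (∀ (H : Type) [Group H] [Finite H],
      ∃ i : H →* Mi, Function.Injective i ∧ IsUniversal (MonoidHom.mrange i)) ∧
    (∀ (H : Type) [Group H] [Finite H] (i j : H →* Mi),
      Function.Injective i → IsUniversal (MonoidHom.mrange i) →
      Function.Injective j → IsUniversal (MonoidHom.mrange j) →
      ∃ u : Miˣ, ∀ h : H, j h = (u : Mi) * i h * ((u⁻¹ : Miˣ) : Mi)) := by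
  refine ⟨fun H _ _ => ?_, fun H _ _ i j hi hUi hj hUj => ?_⟩
  · obtain ⟨ψ⟩ : Nonempty (CanonicalUniverse H ≃ ℕ) := nonempty_equiv_of_countable
    have hcan := isCompleteUniverse_canonicalUniverse (G := H)
    have := hcan.faithfulSMul
    have hk := Mi.injective_homOfEquiv (H := H) ψ
    exact ⟨_, hk, (isUniversal_mrange_iff hk).2 (hcan.omegaVia_homOfEquiv ψ)⟩
  · obtain ⟨e, he⟩ :=
      ((isUniversal_mrange_iff hi).1 hUi).exists_equiv ((isUniversal_mrange_iff hj).1 hUj)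
    exact Mi.exists_units_conj_of_perm e he
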